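/- arXiv:2511.18366 — 7 statements merged into one kernel-verified Lean document; each statement's English description precedes it below -/
import Mathlib

section
/- Let R be a commutative ring and f a formal power series over R with invertible constant term. Then there exists a unique formal power series g over R satisfying g(t) = f(t·g(t)), i.e., g = ∑_{n≥0} f_n t^n g^n where f = ∑ f_n t^n. -/
open PowerSeries

private lemma lagrange_coeff_pow_congr {R : Type*} [CommRing R] {g g' : PowerSeries R} {m : ℕ}
    (h : ∀ k < m, PowerSeries.coeff k g = PowerSeries.coeff k g') (n : ℕ) :
    PowerSeries.coeff m ((PowerSeries.X * g) ^ n) =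
      PowerSeries.coeff m ((PowerSeries.X * g') ^ n) := by
  have h1 : (PowerSeries.X : PowerSeries R) ^ m ∣ g - g' := by
    rw [PowerSeries.X_pow_dvd_iff]
    intro k hk
    simp [h k hk]
  have h2 : (PowerSeries.X : PowerSeries R) ^ (m + 1) ∣
      PowerSeries.X * g - PowerSeries.X * g' := by
    rw [← mul_sub, pow_succ, mul_comm ((PowerSeries.X : PowerSeries R) ^ m) _]
    exact mul_dvd_mul dvd_rfl h1
  have h3 : (PowerSeries.X : PowerSeries R) ^ (m + 1) ∣
      (PowerSeries.X * g) ^ n - (PowerSeries.X * g') ^ n :=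
    h2.trans (sub_dvd_pow_sub_pow _ _ n)
  rw [PowerSeries.X_pow_dvd_iff] at h3
  have := h3 m (Nat.lt_succ_self m)
  rw [map_sub, sub_eq_zero] at this
  exact this

private noncomputable def lagrangeCoeff {R : Type*} [CommRing R] (f : PowerSeries R) : ℕ → R
  | m => ∑ n ∈ Finset.range (m + 1),
      PowerSeries.coeff n f *
        PowerSeries.coeff m
          ((PowerSeries.X *
            PowerSeries.mk (fun k => if _ : k < m then lagrangeCoeff f k else 0)) ^ n)
  termination_by m => m

/-- For a formal power series `f` over a commutative ring `R` with invertible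
constant term, there is a unique power series `g` with `g(t) = f(t·g(t))`, i.e.
`g = ∑_{n≥0} f_n t^n g^n`. -/
theorem lagrange_series_existsUnique (R : Type*) [CommRing R] (f : PowerSeries R)
    (hf : IsUnit (PowerSeries.constantCoeff f)) :
    ∃! g : PowerSeries R, ∀ m : ℕ,
      PowerSeries.coeff m g =
        ∑ n ∈ Finset.range (m + 1),
          PowerSeries.coeff n f * PowerSeries.coeff m ((PowerSeries.X * g) ^ n) := by
  refine ⟨PowerSeries.mk (lagrangeCoeff f), ?_, ?_⟩
  · intro m
    rw [PowerSeries.coeff_mk]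
    rw [lagrangeCoeff]
    refine Finset.sum_congr rfl fun n _ => ?_
    congr 1
    refine lagrange_coeff_pow_congr (fun k hk => ?_) n
    simp [hk]
  · intro g hg
    ext m
    induction m using Nat.strong_induction_on with
    | _ m ih =>
      rw [hg m, PowerSeries.coeff_mk, lagrangeCoeff]
      refine Finset.sum_congr rfl fun n _ => ?_
      congr 1
      refine lagrange_coeff_pow_congr (fun k hk => ?_) n
      simp [hk, ih k hk]
end

section
/- Let f ∈ ℤ[f_1, f_2, ...][[t]] be the generic power series f(t) = 1 + ∑_{n≥1} f_n t^n with polynomial indeterminate coefficients, and let g be the unique solution of g(t) = f(t g(t)). Then f(t) − 1 divides g(t) − 1 in the ring of formal power series, i.e., γ(t) := (g(t)−1)/(f(t)−1) is a well-defined formal power series (the geode). -/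
/-- Let `f = 1 + ∑_{n≥1} f_n t^n` be the generic power series over
`ℤ[f_1, f_2, …]` (here `f_n` is the polynomial variable `MvPolynomial.X n`), and let `g` be the
Lagrange series solving `g(t) = f(t g(t)) = ∑_{n≥0} f_n t^n g(t)^n`.  Then `f - 1` divides
`g - 1` in the ring of formal power series: the geode `γ = (g-1)/(f-1)` exists. -/
theorem geode_wellDefined
    (f g : PowerSeries (MvPolynomial ℕ ℤ))
    (hf : ∀ n : ℕ, PowerSeries.coeff n f =
      if n = 0 then 1 else MvPolynomial.X n)
    (hg : ∀ m : ℕ, PowerSeries.coeff m g =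
      ∑ n ∈ Finset.range (m + 1),
        PowerSeries.coeff n f * PowerSeries.coeff m ((PowerSeries.X * g) ^ n)) :
    ∃ γ : PowerSeries (MvPolynomial ℕ ℤ), g - 1 = γ * (f - 1) := by
  classical
  -- `H = ∑_{n≥1} f_n t^n (1 + g + ⋯ + g^{n-1})`, defined coefficientwise.
  set H : PowerSeries (MvPolynomial ℕ ℤ) := PowerSeries.mk fun m =>
    ∑ n ∈ Finset.range (m + 1), PowerSeries.coeff n f *
      PowerSeries.coeff m (PowerSeries.X ^ n * ∑ i ∈ Finset.range n, g ^ i) with hH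
  -- truncated version of `H` agrees in low coefficients
  have hHc : ∀ q m : ℕ, q ≤ m → PowerSeries.coeff q H =
      PowerSeries.coeff q (∑ n ∈ Finset.range (m + 1),
        PowerSeries.C (PowerSeries.coeff n f) *
          (PowerSeries.X ^ n * ∑ i ∈ Finset.range n, g ^ i)) := by
    intro q m hqm
    rw [map_sum]
    simp only [PowerSeries.coeff_C_mul]
    rw [hH, PowerSeries.coeff_mk]
    apply Finset.sum_subset
    · exact Finset.range_subset_range.2 (by omega)
    · intro n hn hn'
      have hq : q < n := by
        simp only [Finset.mem_range] at hn hn'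
        omega
      have hz : PowerSeries.coeff q
          (PowerSeries.X ^ n * ∑ i ∈ Finset.range n, g ^ i) = 0 :=
        PowerSeries.X_pow_dvd_iff.mp (dvd_mul_right _ _) q hq
      rw [hz, mul_zero]
  have key : (g - 1) * (1 - H) = f - 1 := by
    apply PowerSeries.ext
    intro m
    rw [mul_sub, mul_one, map_sub, map_sub, map_sub]
    have h1 : PowerSeries.coeff m ((g - 1) * H) =
        PowerSeries.coeff m ((g - 1) * ∑ n ∈ Finset.range (m + 1),
          PowerSeries.C (PowerSeries.coeff n f) *
            (PowerSeries.X ^ n * ∑ i ∈ Finset.range n, g ^ i)) := by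
      rw [PowerSeries.coeff_mul, PowerSeries.coeff_mul]
      apply Finset.sum_congr rfl
      intro p hp
      rw [Finset.HasAntidiagonal.mem_antidiagonal] at hp
      rw [hHc p.2 m (by omega)]
    rw [h1]
    have h2 : (g - 1) * (∑ n ∈ Finset.range (m + 1),
        PowerSeries.C (PowerSeries.coeff n f) *
          (PowerSeries.X ^ n * ∑ i ∈ Finset.range n, g ^ i)) =
        ∑ n ∈ Finset.range (m + 1), PowerSeries.C (PowerSeries.coeff n f) *
          ((PowerSeries.X * g) ^ n - PowerSeries.X ^ n) := by
      rw [Finset.mul_sum]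
      apply Finset.sum_congr rfl
      intro n _
      have hgs := geom_sum_mul g n
      calc (g - 1) * (PowerSeries.C (PowerSeries.coeff n f) *
              (PowerSeries.X ^ n * ∑ i ∈ Finset.range n, g ^ i))
          = PowerSeries.C (PowerSeries.coeff n f) *
              (PowerSeries.X ^ n * ((∑ i ∈ Finset.range n, g ^ i) * (g - 1))) := by ring
        _ = PowerSeries.C (PowerSeries.coeff n f) *
              (PowerSeries.X ^ n * (g ^ n - 1)) := by rw [hgs]
        _ = PowerSeries.C (PowerSeries.coeff n f) *
              ((PowerSeries.X * g) ^ n - PowerSeries.X ^ n) := by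
            rw [mul_pow]; ring
    rw [h2, map_sum]
    simp only [PowerSeries.coeff_C_mul, map_sub, mul_sub]
    rw [Finset.sum_sub_distrib, ← hg m]
    have h3 : ∑ n ∈ Finset.range (m + 1),
        PowerSeries.coeff n f * PowerSeries.coeff m (PowerSeries.X ^ n : PowerSeries (MvPolynomial ℕ ℤ)) =
        PowerSeries.coeff m f := by
      rw [Finset.sum_eq_single m]
      · rw [PowerSeries.coeff_X_pow, if_pos rfl, mul_one]
      · intro n _ hnm
        rw [PowerSeries.coeff_X_pow, if_neg (by omega), mul_zero]
      · intro h
        exact absurd (Finset.self_mem_range_succ m) h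
    rw [h3]
    ring
  have hc : PowerSeries.constantCoeff (1 - H) = 1 := by
    have : PowerSeries.constantCoeff H = 0 := by
      rw [hH, ← PowerSeries.coeff_zero_eq_constantCoeff_apply, PowerSeries.coeff_mk]
      simp
    rw [map_sub, this, map_one, sub_zero]
  have hu : IsUnit (1 - H) := PowerSeries.isUnit_iff_constantCoeff.mpr (by rw [hc]; exact isUnit_one)
  obtain ⟨u, hu'⟩ := hu
  refine ⟨(↑u⁻¹ : PowerSeries (MvPolynomial ℕ ℤ)), ?_⟩
  calc g - 1 = (g - 1) * ((1 - H) * ↑u⁻¹) := by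
        rw [← hu', Units.mul_inv, mul_one]
    _ = (↑u⁻¹ : PowerSeries (MvPolynomial ℕ ℤ)) * ((g - 1) * (1 - H)) := by ring
    _ = (↑u⁻¹ : PowerSeries (MvPolynomial ℕ ℤ)) * (f - 1) := by rw [key]
end

section
/- With f, g, γ as in the generic geode setting (f_0 = 1), the coefficients of the geode series γ(t) are polynomials in the f_i with nonnegative integer coefficients. -/
open PowerSeries Finset

private abbrev Rg := MvPolynomial ℕ ℤ

/-- Polynomials with nonnegative coefficients form a subsemiring. -/
private noncomputable def Spos : Subsemiring Rg where
  carrier := {p | ∀ d, 0 ≤ MvPolynomial.coeff d p}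
  zero_mem' := by intro d; simp
  one_mem' := by
    intro d; rw [MvPolynomial.coeff_one]; split <;> norm_num
  add_mem' := by
    intro a b ha hb d
    rw [MvPolynomial.coeff_add]; exact add_nonneg (ha d) (hb d)
  mul_mem' := by
    intro a b ha hb d
    rw [MvPolynomial.coeff_mul]
    exact Finset.sum_nonneg fun x _ => mul_nonneg (ha _) (hb _)

/-- Power series with coefficientwise-nonnegative polynomial coefficients. -/
private noncomputable def Tpos : Subsemiring (PowerSeries Rg) where
  carrier := {φ | ∀ n, PowerSeries.coeff n φ ∈ Spos}
  zero_mem' := by intro n; simp only [map_zero]; exact Spos.zero_mem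
  one_mem' := by
    intro n; rw [PowerSeries.coeff_one]
    split
    · exact Spos.one_mem
    · exact Spos.zero_mem
  add_mem' := by
    intro a b ha hb n
    rw [map_add]; exact Spos.add_mem (ha n) (hb n)
  mul_mem' := by
    intro a b ha hb n
    rw [PowerSeries.coeff_mul]
    exact Spos.sum_mem fun p _ => Spos.mul_mem (ha p.1) (hb p.2)

private lemma X_mem_Tpos : (PowerSeries.X : PowerSeries Rg) ∈ Tpos := by
  intro n
  rw [PowerSeries.coeff_X]
  split
  · exact Spos.one_mem
  · exact Spos.zero_mem

private lemma pow_coeff_mem (g : PowerSeries Rg) :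
    ∀ (n k : ℕ), (∀ j, j ≤ k → PowerSeries.coeff j g ∈ Spos) →
      PowerSeries.coeff k (g ^ n) ∈ Spos := by
  intro n
  induction n with
  | zero =>
    intro k _
    rw [pow_zero, PowerSeries.coeff_one]
    split
    · exact Spos.one_mem
    · exact Spos.zero_mem
  | succ n ihn =>
    intro k h
    rw [pow_succ, PowerSeries.coeff_mul]
    apply Spos.sum_mem
    intro p hp
    have hpm := Finset.HasAntidiagonal.mem_antidiagonal.mp hp
    exact Spos.mul_mem (ihn p.1 fun j hj => h j (by omega)) (h p.2 (by omega))

private lemma f_coeff_mem (f : PowerSeries Rg)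
    (hf : ∀ n : ℕ, PowerSeries.coeff n f = if n = 0 then 1 else MvPolynomial.X n) :
    ∀ n, PowerSeries.coeff n f ∈ Spos := by
  intro n
  rw [hf n]
  split
  · exact Spos.one_mem
  · intro d
    rw [MvPolynomial.coeff_X']
    split <;> norm_num

private lemma g_mem (f g : PowerSeries Rg)
    (hf : ∀ n : ℕ, PowerSeries.coeff n f = if n = 0 then 1 else MvPolynomial.X n)
    (hg : ∀ m : ℕ, PowerSeries.coeff m g =
      ∑ n ∈ Finset.range (m + 1),
        PowerSeries.coeff n f * PowerSeries.coeff m ((PowerSeries.X * g) ^ n)) :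
    ∀ m, PowerSeries.coeff m g ∈ Spos := by
  intro m
  induction m using Nat.strongRecOn with
  | ind m ih =>
    rw [hg m]
    apply Spos.sum_mem
    intro n _
    apply Spos.mul_mem (f_coeff_mem f hf n)
    rw [mul_pow, PowerSeries.coeff_X_pow_mul']
    split
    · rename_i hnm
      match n, hnm with
      | 0, _ =>
        rw [pow_zero, PowerSeries.coeff_one]
        split
        · exact Spos.one_mem
        · exact Spos.zero_mem
      | (k+1), hnm =>
        exact pow_coeff_mem g (k+1) (m - (k+1)) fun j hj => ih j (by omega)
    · exact Spos.zero_mem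

/-- With `f = 1 + ∑_{n≥1} f_n t^n` the generic power series over
`ℤ[f_1, f_2, …]`, `g` the Lagrange series solving `g(t) = f(t g(t))`, and `γ` the geode,
i.e. any series with `g - 1 = γ·(f - 1)`, all coefficients of the geode `γ` are polynomials in
the `f_i` with nonnegative (integer) coefficients. -/
theorem geode_coeff_nonneg
    (f g : PowerSeries (MvPolynomial ℕ ℤ))
    (hf : ∀ n : ℕ, PowerSeries.coeff n f =
      if n = 0 then 1 else MvPolynomial.X n)
    (hg : ∀ m : ℕ, PowerSeries.coeff m g =
      ∑ n ∈ Finset.range (m + 1),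
        PowerSeries.coeff n f * PowerSeries.coeff m ((PowerSeries.X * g) ^ n))
    (γ : PowerSeries (MvPolynomial ℕ ℤ)) (hγ : g - 1 = γ * (f - 1)) :
    ∀ (n : ℕ) (d : ℕ →₀ ℕ), 0 ≤ MvPolynomial.coeff d (PowerSeries.coeff n γ) := by
  classical
  set B : PowerSeries Rg := PowerSeries.mk (fun m =>
    ∑ n ∈ Finset.range (m + 1), PowerSeries.coeff n f *
      PowerSeries.coeff m (PowerSeries.X ^ n * ∑ i ∈ Finset.range n, g ^ i)) with hB
  -- coefficient 0 of B vanishes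
  have hB0 : PowerSeries.coeff 0 B = 0 := by
    rw [hB, PowerSeries.coeff_mk, Finset.sum_range_one]
    simp
  -- B has nonnegative coefficients
  have hBmem : ∀ m, PowerSeries.coeff m B ∈ Spos := by
    intro m
    rw [hB, PowerSeries.coeff_mk]
    apply Spos.sum_mem
    intro n _
    apply Spos.mul_mem (f_coeff_mem f hf n)
    have hT : (PowerSeries.X ^ n * ∑ i ∈ Finset.range n, g ^ i : PowerSeries Rg) ∈ Tpos :=
      Tpos.mul_mem (Tpos.pow_mem X_mem_Tpos n)
        (Tpos.sum_mem fun i _ => Tpos.pow_mem (g_mem f g hf hg) i)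
    exact hT m
  -- the key identity, coefficientwise
  have key : ∀ m, PowerSeries.coeff m ((g - 1) * B) =
      PowerSeries.coeff m g - PowerSeries.coeff m f := by
    intro m
    rw [PowerSeries.coeff_mul]
    have e1 : ∀ p ∈ Finset.HasAntidiagonal.antidiagonal m,
        PowerSeries.coeff p.1 (g - 1) * PowerSeries.coeff p.2 B =
        ∑ n ∈ Finset.range (m + 1), PowerSeries.coeff n f *
          (PowerSeries.coeff p.1 (g - 1) *
            PowerSeries.coeff p.2 (PowerSeries.X ^ n * ∑ i ∈ Finset.range n, g ^ i)) := by
      intro p hp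
      have hp2 : p.2 ≤ m := by
        have := Finset.HasAntidiagonal.mem_antidiagonal.mp hp; omega
      rw [hB, PowerSeries.coeff_mk, Finset.mul_sum]
      have rearr : ∑ n ∈ Finset.range (p.2 + 1),
          PowerSeries.coeff p.1 (g - 1) * (PowerSeries.coeff n f *
            PowerSeries.coeff p.2 (PowerSeries.X ^ n * ∑ i ∈ Finset.range n, g ^ i)) =
          ∑ n ∈ Finset.range (p.2 + 1), PowerSeries.coeff n f *
            (PowerSeries.coeff p.1 (g - 1) *
              PowerSeries.coeff p.2 (PowerSeries.X ^ n * ∑ i ∈ Finset.range n, g ^ i)) :=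
        Finset.sum_congr rfl fun n _ => by ring
      rw [rearr]
      refine Finset.sum_subset (Finset.range_subset_range.mpr (by omega)) ?_
      intro n _ hn
      have hn2 : ¬ n ≤ p.2 := by
        simp only [Finset.mem_range] at hn; omega
      rw [PowerSeries.coeff_X_pow_mul', if_neg hn2, mul_zero, mul_zero]
    rw [Finset.sum_congr rfl e1, Finset.sum_comm]
    have e2 : ∀ n ∈ Finset.range (m + 1),
        (∑ p ∈ Finset.HasAntidiagonal.antidiagonal m, PowerSeries.coeff n f *
          (PowerSeries.coeff p.1 (g - 1) *
            PowerSeries.coeff p.2 (PowerSeries.X ^ n * ∑ i ∈ Finset.range n, g ^ i))) =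
        PowerSeries.coeff n f * PowerSeries.coeff m ((PowerSeries.X * g) ^ n) -
          PowerSeries.coeff n f * PowerSeries.coeff m (PowerSeries.X ^ n) := by
      intro n _
      rw [← Finset.mul_sum, ← PowerSeries.coeff_mul]
      have e3 : (g - 1) * (PowerSeries.X ^ n * ∑ i ∈ Finset.range n, g ^ i) =
          (PowerSeries.X * g) ^ n - PowerSeries.X ^ n := by
        have hgeo : (∑ i ∈ Finset.range n, g ^ i) * (g - 1) = g ^ n - 1 := geom_sum_mul g n
        calc (g - 1) * (PowerSeries.X ^ n * ∑ i ∈ Finset.range n, g ^ i)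
            = PowerSeries.X ^ n * ((∑ i ∈ Finset.range n, g ^ i) * (g - 1)) := by ring
          _ = PowerSeries.X ^ n * (g ^ n - 1) := by rw [hgeo]
          _ = (PowerSeries.X * g) ^ n - PowerSeries.X ^ n := by rw [mul_pow]; ring
      rw [e3, map_sub, mul_sub]
    rw [Finset.sum_congr rfl e2, Finset.sum_sub_distrib]
    congr 1
    · exact (hg m).symm
    · rw [Finset.sum_eq_single_of_mem m (Finset.self_mem_range_succ m)]
      · rw [PowerSeries.coeff_X_pow, if_pos rfl, mul_one]
      · intro n _ hne
        rw [PowerSeries.coeff_X_pow, if_neg (fun h => hne h.symm), mul_zero]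
  -- so (g-1)*B = (g-1) - (f-1)
  have eqB : (g - 1) * B = (g - 1) - (f - 1) := by
    ext m
    rw [key m]
    simp only [map_sub, PowerSeries.coeff_one]
    ring_nf
  -- cancel (f-1) to get γ = γ*B + 1
  have hfne : (f - 1 : PowerSeries Rg) ≠ 0 := by
    intro h
    have h1 : PowerSeries.coeff 1 (f - 1) = 0 := by rw [h, map_zero]
    rw [map_sub, PowerSeries.coeff_one, hf 1] at h1
    simp at h1
  have e4 : (γ * (f - 1)) * B = γ * (f - 1) - (f - 1) := by
    rw [← hγ]; exact eqB
  have e5 : (f - 1) * γ = (f - 1) * (γ * B + 1) := by linear_combination -e4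
  have hγ' : γ = γ * B + 1 := mul_left_cancel₀ hfne e5
  -- final induction: γ has nonnegative coefficients
  have hγmem : ∀ m, PowerSeries.coeff m γ ∈ Spos := by
    intro m
    induction m using Nat.strongRecOn with
    | ind m ih =>
      rw [hγ', map_add, PowerSeries.coeff_mul]
      apply Spos.add_mem
      · apply Spos.sum_mem
        intro p hp
        by_cases h2 : p.2 = 0
        · rw [h2, hB0, mul_zero]; exact Spos.zero_mem
        · have hpm := Finset.HasAntidiagonal.mem_antidiagonal.mp hp
          exact Spos.mul_mem (ih p.1 (by omega)) (hBmem p.2)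
      · rw [PowerSeries.coeff_one]
        split
        · exact Spos.one_mem
        · exact Spos.zero_mem
  exact fun n d => hγmem n d
end

section
/- The number of Łukasiewicz words of length n+1 and sum n equals the n-th Catalan number. -/
open Classical in
/-- The finite set of Łukasiewicz words of length `n+1` and sum `n`, encoded as tuples
`w : Fin (n+1) → Fin (n+1)` (entries are forced to be `≤ n` by the sum condition):
`∑ i, w i = n` and every proper partial sum `w 0 + ⋯ + w (j-1) ≥ j` for `1 ≤ j ≤ n`. -/
noncomputable def lukWords (n : ℕ) : Finset (Fin (n + 1) → Fin (n + 1)) :=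
  Finset.univ.filter fun w =>
    (∑ i, (w i : ℕ)) = n ∧
    ∀ j ∈ Finset.Icc 1 n,
      j ≤ ∑ i ∈ Finset.univ.filter (fun i : Fin (n + 1) => (i : ℕ) < j), (w i : ℕ)

open Fin.NatCast Fin.CommRing

namespace LukAux

variable {n : ℕ}

/-- The word read as a periodic `ℕ`-valued sequence. -/
def w0 (w : Fin (n + 1) → Fin (n + 1)) (m : ℕ) : ℕ := (w (m : Fin (n + 1)) : ℕ)

/-- Prefix sums. -/
def S (w : Fin (n + 1) → Fin (n + 1)) (m : ℕ) : ℕ := ∑ t ∈ Finset.range m, w0 w t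

/-- The (integer) height of the Łukasiewicz path. -/
def F (w : Fin (n + 1) → Fin (n + 1)) (m : ℕ) : ℤ := (S w m : ℤ) - m

lemma S_add (w : Fin (n + 1) → Fin (n + 1)) (m j : ℕ) :
    S w (m + j) = S w m + ∑ t ∈ Finset.range j, w0 w (m + t) :=
  Finset.sum_range_add (w0 w) m j

lemma sum_rot (w : Fin (n + 1) → Fin (n + 1)) (c : Fin (n + 1)) :
    ∑ i, (w (i + c) : ℕ) = ∑ i, (w i : ℕ) :=
  Equiv.sum_comp (Equiv.addRight c) (fun i => (w i : ℕ))

lemma sum_period (w : Fin (n + 1) → Fin (n + 1)) (m : ℕ) :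
    ∑ t ∈ Finset.range (n + 1), w0 w (m + t) = ∑ i, (w i : ℕ) := by
  rw [← Fin.sum_univ_eq_sum_range (fun t => w0 w (m + t)) (n + 1)]
  calc ∑ i : Fin (n + 1), w0 w (m + (i : ℕ))
      = ∑ i : Fin (n + 1), (w ((m : Fin (n + 1)) + i) : ℕ) := by
        refine Finset.sum_congr rfl fun i _ => ?_
        simp [w0, Nat.cast_add, Fin.cast_val_eq_self]
    _ = ∑ i, (w i : ℕ) := Equiv.sum_comp (Equiv.addLeft (m : Fin (n + 1))) (fun i => (w i : ℕ))

lemma S_period (w : Fin (n + 1) → Fin (n + 1)) (hsum : ∑ i, (w i : ℕ) = n) (m : ℕ) :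
    S w (m + (n + 1)) = S w m + n := by
  rw [S_add, sum_period, hsum]

lemma F_period (w : Fin (n + 1) → Fin (n + 1)) (hsum : ∑ i, (w i : ℕ) = n) (m : ℕ) :
    F w (m + (n + 1)) = F w m - 1 := by
  have := S_period w hsum m
  unfold F
  push_cast [this]
  ring

/-- Partial sums over an initial segment of `Fin (n+1)` are range sums. -/
lemma filter_sum_eq (g : Fin (n + 1) → ℕ) {j : ℕ} (hj : j ≤ n + 1) :
    ∑ i ∈ Finset.univ.filter (fun i : Fin (n + 1) => (i : ℕ) < j), g i
      = ∑ t ∈ Finset.range j, g (t : Fin (n + 1)) := by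
  rw [Finset.sum_filter]
  have h2 : (∑ a : Fin (n + 1), if (a : ℕ) < j then g a else 0)
      = ∑ t ∈ Finset.range (n + 1), if t < j then g (t : Fin (n + 1)) else 0 := by
    rw [← Fin.sum_univ_eq_sum_range (fun t => if t < j then g (t : Fin (n+1)) else 0) (n+1)]
    refine Finset.sum_congr rfl fun i _ => ?_
    by_cases h : (i : ℕ) < j <;> simp [h, Fin.cast_val_eq_self]
  rw [h2, ← Finset.sum_subset (Finset.range_subset_range.2 hj)
    (fun x _ hx => if_neg (by simpa using hx))]
  exact Finset.sum_congr rfl fun t ht => if_pos (Finset.mem_range.1 ht)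

def Good (w : Fin (n + 1) → Fin (n + 1)) (c : ℕ) : Prop :=
  ∀ j, 1 ≤ j → j ≤ n → F w c ≤ F w (c + j)

lemma w0_rot (w : Fin (n + 1) → Fin (n + 1)) (c : Fin (n + 1)) (t : ℕ) :
    w0 w ((c : ℕ) + t) = (w ((t : Fin (n + 1)) + c) : ℕ) := by
  simp [w0, Nat.cast_add, Fin.cast_val_eq_self, add_comm]

lemma mem_lukWords_rot_iff (w : Fin (n + 1) → Fin (n + 1))
    (hsum : ∑ i, (w i : ℕ) = n) (c : Fin (n + 1)) :
    ((fun i => w (i + c)) ∈ lukWords n) ↔ Good w (c : ℕ) := by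
  simp only [lukWords, Finset.mem_filter]
  have hs : ∑ i, (w (i + c) : ℕ) = n := by rw [sum_rot w c, hsum]
  simp only [Finset.mem_univ, true_and, hs, Finset.mem_Icc]
  constructor
  · intro h j h1 h2
    have key : S w ((c : ℕ) + j) = S w (c : ℕ) +
        ∑ i ∈ Finset.univ.filter (fun i : Fin (n + 1) => (i : ℕ) < j), (w (i + c) : ℕ) := by
      rw [S_add]
      congr 1
      rw [filter_sum_eq (fun i => (w (i + c) : ℕ)) (le_trans h2 (Nat.le_succ n))]
      exact Finset.sum_congr rfl fun t _ => w0_rot w c t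
    have := h j ⟨h1, h2⟩
    unfold F
    omega
  · intro h j hj
    have key : S w ((c : ℕ) + j) = S w (c : ℕ) +
        ∑ i ∈ Finset.univ.filter (fun i : Fin (n + 1) => (i : ℕ) < j), (w (i + c) : ℕ) := by
      rw [S_add]
      congr 1
      rw [filter_sum_eq (fun i => (w (i + c) : ℕ)) (le_trans hj.2 (Nat.le_succ n))]
      exact Finset.sum_congr rfl fun t _ => w0_rot w c t
    have := h j hj.1 hj.2
    unfold F at this
    omega

end LukAux

namespace LukAux

variable {n : ℕ}

lemma exists_first_min (w : Fin (n + 1) → Fin (n + 1)) :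
    ∃ c ≤ n, (∀ m ≤ n, F w c ≤ F w m) ∧ ∀ m < c, F w c < F w m := by
  have hex : ∃ c, c ≤ n ∧ ∀ m ≤ n, F w c ≤ F w m := by
    obtain ⟨c, hc, hmin⟩ := Finset.exists_min_image (Finset.range (n + 1)) (F w)
      ⟨0, Finset.mem_range.2 (Nat.succ_pos n)⟩
    exact ⟨c, Nat.lt_succ_iff.1 (Finset.mem_range.1 hc),
      fun m hm => hmin m (Finset.mem_range.2 (Nat.lt_succ_of_le hm))⟩
  classical
  let c := Nat.find hex
  obtain ⟨hcn, hcmin⟩ := Nat.find_spec hex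
  refine ⟨c, hcn, hcmin, fun m hm => ?_⟩
  by_contra hlt
  push_neg at hlt
  have hmn : m ≤ n := le_trans (le_of_lt hm) hcn
  have : F w m ≤ F w c := hlt
  have hmmin : ∀ m' ≤ n, F w m ≤ F w m' := fun m' hm' => le_trans this (hcmin m' hm')
  exact absurd ⟨hmn, hmmin⟩ (Nat.find_min hex hm)

lemma good_of_first_min (w : Fin (n + 1) → Fin (n + 1)) (hsum : ∑ i, (w i : ℕ) = n)
    {c : ℕ} (hcn : c ≤ n) (hmin : ∀ m ≤ n, F w c ≤ F w m)
    (hstrict : ∀ m < c, F w c < F w m) : Good w c := by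
  intro j h1 h2
  by_cases h : c + j ≤ n
  · exact hmin _ h
  · push_neg at h
    have hm' : c + j - (n + 1) < c := by omega
    have heq : c + j = (c + j - (n + 1)) + (n + 1) := by omega
    have := F_period w hsum (c + j - (n + 1))
    rw [heq, this]
    have := hstrict _ hm'
    omega

lemma good_unique (w : Fin (n + 1) → Fin (n + 1)) (hsum : ∑ i, (w i : ℕ) = n)
    {c c' : ℕ} (hcn : c ≤ n) (hc'n : c' ≤ n) (hc : Good w c) (hc' : Good w c') :
    c = c' := by
  by_contra hne
  -- wlog c < c'
  rcases Nat.lt_or_ge c c' with hlt | hge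
  · have h1 : F w c ≤ F w c' := by
      have := hc (c' - c) (by omega) (by omega)
      rwa [Nat.add_sub_cancel' (le_of_lt hlt)] at this
    have h2 : F w c' ≤ F w (c' + (c + (n + 1) - c')) := hc' _ (by omega) (by omega)
    rw [show c' + (c + (n + 1) - c') = c + (n + 1) by omega, F_period w hsum] at h2
    omega
  · have hlt : c' < c := by omega
    have h1 : F w c' ≤ F w c := by
      have := hc' (c - c') (by omega) (by omega)
      rwa [Nat.add_sub_cancel' (le_of_lt hlt)] at this
    have h2 : F w c ≤ F w (c + (c' + (n + 1) - c)) := hc _ (by omega) (by omega)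
    rw [show c + (c' + (n + 1) - c) = c' + (n + 1) by omega, F_period w hsum] at h2
    omega

/-- The cycle lemma: every word of sum `n` has a unique rotation that is a Łukasiewicz word. -/
lemma existsUnique_rot (w : Fin (n + 1) → Fin (n + 1)) (hsum : ∑ i, (w i : ℕ) = n) :
    ∃! c : Fin (n + 1), (fun i => w (i + c)) ∈ lukWords n := by
  obtain ⟨c, hcn, hmin, hstrict⟩ := exists_first_min w
  have hgood := good_of_first_min w hsum hcn hmin hstrict
  refine ⟨⟨c, Nat.lt_succ_of_le hcn⟩, ?_, fun c' hc' => ?_⟩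
  · exact (mem_lukWords_rot_iff w hsum _).2 hgood
  · have hg' : Good w (c' : ℕ) := (mem_lukWords_rot_iff w hsum c').1 hc'
    have := good_unique w hsum (Nat.lt_succ_iff.1 c'.isLt) hcn hg' hgood
    exact Fin.ext this

end LukAux

namespace LukAux

variable {n : ℕ}

lemma sum_of_mem_luk {u : Fin (n + 1) → Fin (n + 1)} (hu : u ∈ lukWords n) :
    ∑ i, (u i : ℕ) = n := by
  simp only [lukWords, Finset.mem_filter] at hu
  exact hu.2.1

/-- Full words of sum `n`. -/
def A (n : ℕ) : Finset (Fin (n + 1) → Fin (n + 1)) :=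
  Finset.univ.filter fun w => ∑ i, (w i : ℕ) = n

lemma mem_A {w : Fin (n + 1) → Fin (n + 1)} : w ∈ A n ↔ ∑ i, (w i : ℕ) = n := by
  simp [A]

lemma card_A_eq : (A n).card = (n + 1) * (lukWords n).card := by
  have key : ((Finset.univ : Finset (Fin (n + 1))) ×ˢ lukWords n).card = (A n).card := by
    refine Finset.card_bij (fun p _ => fun k => p.2 (k + p.1)) ?_ ?_ ?_
    · rintro ⟨c, u⟩ hp
      rw [Finset.mem_product] at hp
      exact mem_A.2 (by rw [sum_rot u c, sum_of_mem_luk hp.2])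
    · rintro ⟨c, u⟩ hp ⟨c', u'⟩ hp' heq
      rw [Finset.mem_product] at hp hp'
      have hu := hp.2
      have hu' := hp'.2
      have hrot : (fun i => u (i + (c - c'))) = u' := by
        funext i
        have h := congrFun heq (i - c')
        simp only at h
        rw [show i - c' + c = i + (c - c') from by ring,
          show i - c' + c' = i from by ring] at h
        exact h
      obtain ⟨c₀, _, huniq⟩ := existsUnique_rot u (sum_of_mem_luk hu)
      have h1 : c - c' = c₀ := huniq _ (show (fun i => u (i + (c - c'))) ∈ lukWords n by rw [hrot]; exact hu')
      have h2 : (0 : Fin (n + 1)) = c₀ := huniq 0 (by simpa using hu)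
      have hd : c - c' = 0 := h1.trans h2.symm
      have hcc : c = c' := sub_eq_zero.1 hd
      have huu : u = u' := by rw [← hrot, hd]; funext i; simp
      simp [hcc, huu]
    · intro w hw
      obtain ⟨c, hc, -⟩ := existsUnique_rot w (mem_A.1 hw)
      refine ⟨(-c, fun i => w (i + c)), Finset.mem_product.2 ⟨Finset.mem_univ _, hc⟩, ?_⟩
      funext k
      simp [add_assoc]
  rw [← key, Finset.card_product, Finset.card_univ, Fintype.card_fin]

noncomputable def wordEquiv :
    {w : Fin (n + 1) → Fin (n + 1) // ∑ i, (w i : ℕ) = n} ≃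
      {P : Fin (n + 1) → ℕ // ∑ i, P i = n} where
  toFun w := ⟨fun i => (w.1 i : ℕ), w.2⟩
  invFun P := ⟨fun i => ⟨P.1 i, by
      have h := Finset.single_le_sum (f := P.1) (fun j _ => Nat.zero_le (P.1 j))
        (Finset.mem_univ i)
      rw [P.2] at h
      omega⟩, P.2⟩
  left_inv w := Subtype.ext (funext fun i => Fin.ext rfl)
  right_inv P := rfl

lemma card_A : (A n).card = Nat.centralBinom n := by
  have h2 : n + 1 + n - 1 = 2 * n := by omega
  classical
  have h1 : (A n).card
      = Fintype.card {w : Fin (n + 1) → Fin (n + 1) // ∑ i, (w i : ℕ) = n} := by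
    rw [Fintype.card_subtype]
    congr 1
  rw [h1, Fintype.card_congr ((wordEquiv (n := n)).trans
    (Sym.equivNatSumOfFintype (Fin (n + 1)) n).symm)]
  rw [Sym.card_sym_fin_eq_multichoose (n + 1) n, Nat.multichoose_eq,
    Nat.centralBinom_eq_two_mul_choose, h2]

end LukAux


/-- The number of Łukasiewicz words of length `n+1` and sum `n` is the
`n`-th Catalan number. -/
theorem lukWords_card (n : ℕ) : (lukWords n).card = catalan n := by
  have h := LukAux.card_A (n := n)
  rw [LukAux.card_A_eq, ← succ_mul_catalan_eq_centralBinom] at h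
  exact Nat.eq_of_mul_eq_mul_left (Nat.succ_pos n) h
end

section
/- Let g(x) be the specialization of the Lagrange series under S_n ↦ u x^n, i.e., the unique power series solution of g = 1 + u x g/(1 − x g), written g = ∑_{n≥0} g_n(u) x^n with g_n(u) ∈ ℚ[u]. Then the generating series ∑_{n≥0} a_n x^n with a_n = g_n(2)/2 for n ≥ 1 (and a_0 = 1) applied to γ = (g−1)/(σ−1) with σ = 1 + ux/(1−x) yields, after the substitution u = 2 and dividing appropriately, the closed form 1 + ((x−1)√(x²−6x+1) − x² − 4x + 1)/(8x²). -/
open PowerSeries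


/-- Let `g = ∑ g_n(u) x^n` over `ℚ[u]` be the specialization of the Lagrange
series under `S_n ↦ u x^n`, i.e. the unique power series with constant term `1` solving
`g = 1 + uxg/(1 − xg)` (equivalently `g(1 − xg) = 1 + (u−1)xg`).  Let `σ = 1 + ux/(1−x)` and
let `γ = (g−1)/(σ−1)` (i.e. `γ·ux = (g−1)(1−x)`).  Then the series
`A = 1 + ∑_{n≥1} (γ_n(u)/u)|_{u=2} x^n` obtained by substituting `u = 2` and dividing by `u`
has the closed form `A = 1 + ((x−1)√(x²−6x+1) − x² − 4x + 1)/(8x²)`, where `√(x²−6x+1)` is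
the power series square root with constant term `1`. -/
theorem geode_ribbon_closed_form
    (g γ : PowerSeries (Polynomial ℚ)) (s A : PowerSeries ℚ)
    (hg0 : PowerSeries.constantCoeff g = 1)
    (hg : g * (1 - PowerSeries.X * g) =
      1 + PowerSeries.C (R := Polynomial ℚ) (Polynomial.X - 1) * PowerSeries.X * g)
    (hγ : γ * (PowerSeries.C (R := Polynomial ℚ) Polynomial.X * PowerSeries.X) =
      (g - 1) * (1 - PowerSeries.X))
    (hs0 : PowerSeries.constantCoeff (R := ℚ) s = 1)
    (hs : s ^ 2 = PowerSeries.X ^ 2 - 6 * PowerSeries.X + 1)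
    (hA : ∀ n : ℕ, PowerSeries.coeff (R := ℚ) n A =
      if n = 0 then 1 else Polynomial.eval 2 (PowerSeries.coeff n γ) / 2) :
    8 * PowerSeries.X ^ 2 * (A - 1) =
      (PowerSeries.X - 1) * s - PowerSeries.X ^ 2 - 4 * PowerSeries.X + 1 := by
  set φ : Polynomial ℚ →+* ℚ := Polynomial.evalRingHom 2 with hφ
  set G : PowerSeries ℚ := PowerSeries.map φ g with hG
  set Γ : PowerSeries ℚ := PowerSeries.map φ γ with hΓdef
  have hC2 : (PowerSeries.C (R := ℚ)) 2 = (2 : PowerSeries ℚ) := by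
    exact map_ofNat _ 2
  have eq1 : G * (1 - X * G) = 1 + X * G := by
    have h := congrArg (PowerSeries.map φ) hg
    simp only [map_mul, map_sub, map_add, map_one, PowerSeries.map_X, PowerSeries.map_C,
      hφ, Polynomial.coe_evalRingHom, Polynomial.eval_sub, Polynomial.eval_X,
      Polynomial.eval_one, hC2, ← hG] at h
    norm_num at h
    exact h
  have eq2 : Γ * (2 * X) = (G - 1) * (1 - X) := by
    have h := congrArg (PowerSeries.map φ) hγ
    simp only [map_mul, map_sub, map_one, PowerSeries.map_X, PowerSeries.map_C,
      hφ, Polynomial.coe_evalRingHom, Polynomial.eval_X, hC2, ← hG, ← hΓdef] at h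
    exact h
  -- constant coefficient of G
  have hG0 : PowerSeries.constantCoeff (R := ℚ) G = 1 := by
    rw [← PowerSeries.coeff_zero_eq_constantCoeff, hG, PowerSeries.coeff_map,
      PowerSeries.coeff_zero_eq_constantCoeff, hg0, map_one]
  -- coefficient 1 of G
  have hG1 : PowerSeries.coeff (R := ℚ) 1 G = 2 := by
    have h1 := congrArg (PowerSeries.coeff (R := ℚ) 1) eq1
    simp [mul_sub, mul_one, map_add, map_sub, PowerSeries.coeff_one,
      PowerSeries.coeff_succ_X_mul] at h1
    rw [show G * (PowerSeries.X * G) = PowerSeries.X * (G * G) from by ring,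
      PowerSeries.coeff_succ_X_mul, PowerSeries.coeff_zero_eq_constantCoeff, map_mul] at h1
    simp [hG0, map_ofNat] at h1
    linarith
  -- constant coefficient of Γ
  have hΓ0 : PowerSeries.constantCoeff (R := ℚ) Γ = 1 := by
    have h1 := congrArg (PowerSeries.coeff (R := ℚ) 1) eq2
    simp [sub_mul, mul_sub, mul_one, one_mul, map_add, map_sub, PowerSeries.coeff_one,
      PowerSeries.coeff_succ_X_mul, hG1] at h1
    rw [show Γ * (2 * PowerSeries.X) = PowerSeries.X * (2 * Γ) from by ring,
      PowerSeries.coeff_succ_X_mul, PowerSeries.coeff_zero_eq_constantCoeff, map_mul] at h1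
    simp [hG0, map_ofNat] at h1
    linarith
  -- A relation
  have eqA : 2 * (A - 1) = Γ - 1 := by
    ext n
    rcases n with _ | n
    · rw [← hC2, PowerSeries.coeff_C_mul, map_sub, hA 0]
      simp [PowerSeries.coeff_zero_eq_constantCoeff, hΓ0]
    · have := hA (n+1)
      simp at this
      rw [← hC2, PowerSeries.coeff_C_mul, map_sub, this, PowerSeries.coeff_one]
      simp [hφ, hΓdef, PowerSeries.coeff_map]
      ring
  -- identify s
  have hsq : (2 * X * G - (1 - X)) * (2 * X * G - (1 - X)) = s * s := by
    have : s * s = X ^ 2 - 6 * X + 1 := by rw [← sq]; exact hs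
    rw [this]
    linear_combination (-(4:ℚ⟦X⟧) * X) * eq1
  have hfac : (2 * X * G - (1 - X) - s) * (2 * X * G - (1 - X) + s) = 0 := by
    linear_combination hsq
  have hS : s = 1 - X - 2 * X * G := by
    rcases mul_eq_zero.mp hfac with h | h
    · exfalso
      have := congrArg (PowerSeries.constantCoeff (R := ℚ)) h
      rw [map_sub, map_sub, map_mul, map_mul, map_sub, map_one] at this
      simp [hG0, hs0] at this
      norm_num at this
    · linear_combination h
  linear_combination 4 * X^2 * eqA + 2 * X * eq2 + (1 - X) * hS
end

section
/- Let g be the noncommutative Lagrange series g = ∑_{n≥0} S_n g^n over noncommutative symmetric functions, and γ = g S_1^{-1} the geode, where S_1^{-1} is the linear operator deleting a final factor S_1 (sending S^{i_1⋯i_r} to S^{i_1⋯i_{r−1}} if i_r = 1 and to 0 otherwise). Then γ satisfies Gessel's formula: γ = (1 − ∑_{n≥1} S_n (1 + g + ⋯ + g^{n−1}))^{-1}. -/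
noncomputable section

/-- The free associative algebra over `ℚ` on the noncommuting generators `S_1, S_2, …`
(the letter `n` stands for `S_n`; the letter `0` is never used). -/
abbrev NSym : Type := FreeAlgebra ℚ ℕ

/-- The series `S_n t^n` (with `S_0 = 1`), so that the completed algebra of noncommutative
symmetric functions graded by `deg S_n = n` is modelled by power series whose `n`-th
coefficient is the degree-`n` component. -/
def S (n : ℕ) : PowerSeries NSym :=
  if n = 0 then 1 else PowerSeries.monomial n (FreeAlgebra.ι ℚ n)

/-- The identification of the free algebra with the monoid algebra of the free monoid,
giving access to the basis of words `S^I = S_{i_1} ⋯ S_{i_r}`. -/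
def toMA : NSym ≃ₐ[ℚ] MonoidAlgebra ℚ (FreeMonoid ℕ) :=
  FreeAlgebra.equivMonoidAlgebraFreeMonoid

/-- The coefficient of the word `S^I` in an element of the free algebra. -/
def wcoeff (x : NSym) (I : List ℕ) : ℚ := (toMA x).coeff (FreeMonoid.ofList I)

/-- The operator `S_k^{-1}`: it sends the word `S^{i_1 ⋯ i_r}` to `S^{i_1 ⋯ i_{r-1}}` if
`i_r = k`, and to `0` otherwise (in particular scalars are sent to `0`). -/
def Sinv (k : ℕ) (x : NSym) : NSym :=
  toMA.symm (Finsupp.sum (toMA x).coeff fun w c =>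
    if (FreeMonoid.toList w).getLast? = some k then
      (MonoidAlgebra.ofCoeff (Finsupp.single (FreeMonoid.ofList ((FreeMonoid.toList w).dropLast)) c) :
        MonoidAlgebra ℚ (FreeMonoid ℕ))
    else 0)

/-- `σ_1 = ∑_{n≥0} S_n`. -/
def sigma1 : PowerSeries NSym :=
  PowerSeries.mk fun n => if n = 0 then 1 else FreeAlgebra.ι ℚ n

abbrev MA := MonoidAlgebra ℚ (FreeMonoid ℕ)

def L' (f : MA) : MA := Finsupp.sum f.coeff fun w c =>
    if (FreeMonoid.toList w).getLast? = some 1 then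
      (MonoidAlgebra.single (FreeMonoid.ofList ((FreeMonoid.toList w).dropLast)) c : MA)
    else 0

lemma Sinv_eq (x : NSym) : Sinv 1 x = toMA.symm (L' (toMA x)) := rfl

lemma L'_single (w : FreeMonoid ℕ) (c : ℚ) :
    L' (MonoidAlgebra.single w c) =
      if (FreeMonoid.toList w).getLast? = some 1 then
        (MonoidAlgebra.single (FreeMonoid.ofList ((FreeMonoid.toList w).dropLast)) c : MA)
      else 0 := by
  unfold L'
  rw [MonoidAlgebra.coeff_single]
  apply Finsupp.sum_single_index
  split <;> simp

lemma L'_add (f g : MA) : L' (f + g) = L' f + L' g := by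
  unfold L'
  classical
  rw [MonoidAlgebra.coeff_add]
  apply Finsupp.sum_add_index
  · intro w _; split <;> simp
  · intro w _ b₁ b₂; split <;> simp [MonoidAlgebra.single_add]

lemma L'_smul (c : ℚ) (f : MA) : L' (c • f) = c • L' f := by
  classical
  unfold L'
  rw [MonoidAlgebra.coeff_smul, Finsupp.sum_smul_index' (by intro w; split <;> simp)]
  rw [Finsupp.smul_sum]
  congr 1; ext w b
  split <;> simp [MonoidAlgebra.smul_single]

lemma toList_one : FreeMonoid.toList (1 : FreeMonoid ℕ) = [] := rfl

lemma L'_one_single (b : ℚ) : L' (MonoidAlgebra.single (1 : FreeMonoid ℕ) b) = 0 := by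
  rw [show (MonoidAlgebra.single (1 : FreeMonoid ℕ) b : MA) = MonoidAlgebra.single 1 b from rfl,
    L'_single]
  simp [toList_one]

lemma L'_single_single (u v : FreeMonoid ℕ) (a b : ℚ) :
    L' (MonoidAlgebra.single u a * MonoidAlgebra.single v b) =
      MonoidAlgebra.single u a * L' (MonoidAlgebra.single v b) +
        ((MonoidAlgebra.single v b : MA).coeff 1) • L' (MonoidAlgebra.single u a) := by
  classical
  rw [show (MonoidAlgebra.single u a * MonoidAlgebra.single v b : MA)
      = MonoidAlgebra.single (u * v) (a * b) from MonoidAlgebra.single_mul_single ..]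
  rcases eq_or_ne v 1 with hv | hv
  · subst hv
    rw [mul_one, L'_one_single, mul_zero, zero_add]
    rw [show (MonoidAlgebra.single u (a*b) : MA) = MonoidAlgebra.single u (a*b) from rfl,
      show (MonoidAlgebra.single u a : MA) = MonoidAlgebra.single u a from rfl,
      L'_single, L'_single, MonoidAlgebra.coeff_single, Finsupp.single_eq_same]
    split
    · rw [MonoidAlgebra.smul_single, smul_eq_mul, mul_comm]
    · simp
  · have hv' : FreeMonoid.toList v ≠ [] := fun h => hv (FreeMonoid.toList.injective (by simp [h, toList_one]))
    rw [show (MonoidAlgebra.single v b : MA) = MonoidAlgebra.single v b from rfl,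
      show (MonoidAlgebra.single u a : MA) = MonoidAlgebra.single u a from rfl,
      show (MonoidAlgebra.single (u*v) (a*b) : MA) = MonoidAlgebra.single (u*v) (a*b) from rfl]
    rw [L'_single, L'_single]
    have hval : ((MonoidAlgebra.single v b : MA).coeff 1) = 0 := Finsupp.single_eq_of_ne' hv
    rw [hval, zero_smul, add_zero]
    have htl : FreeMonoid.toList (u * v) = FreeMonoid.toList u ++ FreeMonoid.toList v := rfl
    rw [htl, List.getLast?_append_of_ne_nil _ hv', List.dropLast_append_of_ne_nil hv']
    split
    · rw [show FreeMonoid.ofList (FreeMonoid.toList u ++ (FreeMonoid.toList v).dropLast)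
          = u * FreeMonoid.ofList ((FreeMonoid.toList v).dropLast) from rfl]
      exact (MonoidAlgebra.single_mul_single u _ a _).symm
    · simp

lemma L'_zero : L' 0 = 0 := by
  unfold L'
  rw [MonoidAlgebra.coeff_zero]
  exact Finsupp.sum_zero_index

lemma L'_mul (f h : MA) : L' (f * h) = f * L' h + (h.coeff 1) • L' f := by
  induction h using MonoidAlgebra.induction_linear with
  | zero => simp [L'_zero]
  | add h1 h2 ih1 ih2 =>
      rw [mul_add, L'_add, ih1, ih2, L'_add, mul_add]
      rw [show ((h1 + h2 : MA).coeff 1) = h1.coeff 1 + h2.coeff 1 from rfl, add_smul]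
      abel
  | single v b =>
      induction f using MonoidAlgebra.induction_linear with
      | zero => simp [L'_zero]
      | add f1 f2 ih1 ih2 =>
          rw [add_mul, L'_add, ih1, ih2, L'_add, add_mul, smul_add]
          abel
      | single u a => exact L'_single_single u v a b

def E (x : NSym) : ℚ := (toMA x).coeff 1

lemma ma_one_def : (1 : MA) = MonoidAlgebra.single 1 1 := rfl

lemma ma_apply_one_mul (f h : MA) : (f * h).coeff 1 = f.coeff 1 * h.coeff 1 := by
  classical
  induction h using MonoidAlgebra.induction_linear with
  | zero => simp
  | add h1 h2 ih1 ih2 =>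
      rw [mul_add, MonoidAlgebra.coeff_add, Finsupp.add_apply, ih1, ih2, MonoidAlgebra.coeff_add, Finsupp.add_apply, mul_add]
  | single v b =>
      induction f using MonoidAlgebra.induction_linear with
      | zero => simp
      | add f1 f2 ih1 ih2 =>
          rw [add_mul, MonoidAlgebra.coeff_add, Finsupp.add_apply, ih1, ih2, MonoidAlgebra.coeff_add, Finsupp.add_apply, add_mul]
      | single u a =>
          rw [show (MonoidAlgebra.single u a * MonoidAlgebra.single v b : MA)
            = MonoidAlgebra.single (u * v) (a * b) from MonoidAlgebra.single_mul_single ..]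
          rcases eq_or_ne u 1 with hu | hu
          · rcases eq_or_ne v 1 with hv | hv
            · subst hu; subst hv; simp
            · subst hu
              rw [one_mul]
              rw [show (MonoidAlgebra.single v (a*b) : MA).coeff 1 = (Finsupp.single v (a*b)) 1 from rfl,
                show (MonoidAlgebra.single v b : MA).coeff 1 = (Finsupp.single v b) 1 from rfl,
                Finsupp.single_eq_of_ne' hv, Finsupp.single_eq_of_ne' hv, mul_zero]
          · have huv : u * v ≠ 1 := by
              intro h
              apply hu
              have h2 := congrArg FreeMonoid.toList h
              rw [show FreeMonoid.toList (u*v) = FreeMonoid.toList u ++ FreeMonoid.toList v from rfl,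
                toList_one, List.append_eq_nil_iff] at h2
              exact FreeMonoid.toList.injective (by rw [h2.1, toList_one])
            rw [show (MonoidAlgebra.single (u*v) (a*b) : MA).coeff 1 = (Finsupp.single (u*v) (a*b)) 1 from rfl,
              show (MonoidAlgebra.single u a : MA).coeff 1 = (Finsupp.single u a) 1 from rfl,
              Finsupp.single_eq_of_ne' huv, Finsupp.single_eq_of_ne' hu, zero_mul]

lemma E_mul (x y : NSym) : E (x * y) = E x * E y := by
  unfold E; rw [map_mul]; exact ma_apply_one_mul _ _

lemma E_one : E 1 = 1 := by
  unfold E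
  rw [show toMA (1 : NSym) = 1 from map_one toMA]
  rw [show ((1:MA).coeff 1) = (Finsupp.single (1:FreeMonoid ℕ) (1:ℚ)) 1 from rfl,
    Finsupp.single_eq_same]

lemma E_iota (n : ℕ) : E (FreeAlgebra.ι ℚ n) = 0 := by
  unfold E
  rw [show toMA (FreeAlgebra.ι ℚ n) = MonoidAlgebra.single (FreeMonoid.of n) 1 by
    simp [toMA, FreeAlgebra.equivMonoidAlgebraFreeMonoid]]
  exact Finsupp.single_eq_of_ne (fun h => by
    have := congrArg FreeMonoid.toList h
    rw [toList_one] at this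
    simp [FreeMonoid.toList_of] at this)

def Elin : NSym →ₗ[ℚ] ℚ :=
  (Finsupp.lapply 1).comp ((MonoidAlgebra.coeffLinearEquiv ℚ).toLinearMap.comp toMA.toLinearMap)

lemma Elin_apply (x : NSym) : Elin x = E x := rfl

def Llin : NSym →ₗ[ℚ] NSym where
  toFun := Sinv 1
  map_add' x y := by
    simp only [Sinv_eq]
    rw [map_add, L'_add, map_add]
  map_smul' c x := by
    simp only [Sinv_eq, RingHom.id_apply]
    rw [map_smul, L'_smul, map_smul]

lemma Llin_apply (x : NSym) : Llin x = Sinv 1 x := rfl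

lemma Sinv_mul (x y : NSym) : Sinv 1 (x * y) = x * Sinv 1 y + E y • Sinv 1 x := by
  simp only [Sinv_eq]
  rw [map_mul, L'_mul, map_add, map_mul, map_smul, AlgEquiv.symm_apply_apply]
  rfl

lemma Sinv_one : Sinv 1 (1 : NSym) = 0 := by
  rw [Sinv_eq, map_one, ma_one_def, L'_one_single, map_zero]

lemma Sinv_zero : Sinv 1 (0 : NSym) = 0 := map_zero Llin

lemma Sinv_iota (k : ℕ) : Sinv 1 (FreeAlgebra.ι ℚ k) = if k = 1 then 1 else 0 := by
  rw [Sinv_eq]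
  rw [show toMA (FreeAlgebra.ι ℚ k) = MonoidAlgebra.single (FreeMonoid.of k) 1 by
    simp [toMA, FreeAlgebra.equivMonoidAlgebraFreeMonoid]]
  rw [show (MonoidAlgebra.single (FreeMonoid.of k) 1 : MA) = MonoidAlgebra.single (FreeMonoid.of k) 1 from rfl,
    L'_single]
  rw [show FreeMonoid.toList (FreeMonoid.of k) = [k] from rfl]
  simp only [List.getLast?_singleton, List.dropLast_singleton, Option.some.injEq]
  split
  · rename_i h
    rw [show (MonoidAlgebra.single (FreeMonoid.ofList []) (1:ℚ) : MA) = 1 from rfl, map_one]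
  · rw [map_zero]

open PowerSeries in
lemma coeff_monomial_mul' (k m : ℕ) (a : NSym) (f : PowerSeries NSym) :
    coeff m (monomial k a * f) = if k ≤ m then a * coeff (m-k) f else 0 := by
  rw [coeff_mul, Finset.Nat.sum_antidiagonal_eq_sum_range_succ_mk]
  simp [coeff_monomial, ite_mul, Finset.sum_ite_eq', Nat.lt_succ_iff]

def La (f : PowerSeries NSym) : PowerSeries NSym :=
  PowerSeries.mk fun k => Sinv 1 (PowerSeries.coeff k f)

lemma coeff_La (k : ℕ) (f : PowerSeries NSym) :
    PowerSeries.coeff k (La f) = Sinv 1 (PowerSeries.coeff k f) :=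
  PowerSeries.coeff_mk _ _

lemma La_one : La 1 = 0 := by
  ext k
  rw [coeff_La, PowerSeries.coeff_one, map_zero]
  split
  · exact Sinv_one
  · exact Sinv_zero

lemma La_mul_right (g : PowerSeries NSym)
    (hE : ∀ j, Elin (PowerSeries.coeff j g) = if j = 0 then 1 else 0)
    (f : PowerSeries NSym) : La (f * g) = f * La g + La f := by
  ext m
  rw [coeff_La, PowerSeries.coeff_mul]
  rw [show (Sinv 1 (∑ p ∈ Finset.HasAntidiagonal.antidiagonal m,
      PowerSeries.coeff p.1 f * PowerSeries.coeff p.2 g))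
    = Llin (∑ p ∈ Finset.HasAntidiagonal.antidiagonal m,
      PowerSeries.coeff p.1 f * PowerSeries.coeff p.2 g) from rfl]
  rw [map_sum]
  simp only [Llin_apply, Sinv_mul]
  rw [Finset.sum_add_distrib]
  rw [map_add, PowerSeries.coeff_mul]
  congr 1
  · apply Finset.sum_congr rfl
    intro p _
    rw [coeff_La]
  · have h1 : ∀ p ∈ Finset.HasAntidiagonal.antidiagonal m, p ≠ (m, 0) →
        E (PowerSeries.coeff p.2 g) • Sinv 1 (PowerSeries.coeff p.1 f) = 0 := by
      intro p hp hne
      rw [Finset.HasAntidiagonal.mem_antidiagonal] at hp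
      have hp2 : p.2 ≠ 0 := by
        intro h0
        exact hne (Prod.ext (by omega) h0)
      rw [← Elin_apply, hE, if_neg hp2, zero_smul]
    rw [Finset.sum_eq_single (m, 0) h1 (by intro h; exact absurd (by simp) h)]
    rw [← Elin_apply, hE, if_pos rfl, one_smul, coeff_La]

lemma La_pow (g : PowerSeries NSym)
    (hE : ∀ j, Elin (PowerSeries.coeff j g) = if j = 0 then 1 else 0)
    (n : ℕ) : La (g ^ n) = (∑ j ∈ Finset.range n, g ^ j) * La g := by
  induction n with
  | zero => rw [pow_zero, La_one, Finset.range_zero, Finset.sum_empty, zero_mul]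
  | succ n ih =>
      rw [pow_succ, La_mul_right g hE, ih, Finset.sum_range_succ, add_mul, add_comm]

lemma coeff_S_mul {n : ℕ} (hn : 1 ≤ n) (m : ℕ) (f : PowerSeries NSym) :
    PowerSeries.coeff m (S n * f) =
      if n ≤ m then FreeAlgebra.ι ℚ n * PowerSeries.coeff (m - n) f else 0 := by
  rw [S, if_neg (by omega)]
  exact coeff_monomial_mul' n m _ f


/-- **Gessel's formula.** Let `g` be the noncommutative Lagrange series
`g = ∑_{n≥0} S_n g^n`, let `γ = g S_1^{-1}` be the geode, and let
`D = ∑_{n≥1} S_n (1 + g + ⋯ + g^{n-1})`.  Then `γ = (1 - D)^{-1}`. -/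
theorem gessel_formula
    (g γ D : PowerSeries NSym)
    (hg : ∀ m : ℕ, PowerSeries.coeff m g =
      ∑ n ∈ Finset.range (m + 1), PowerSeries.coeff m (S n * g ^ n))
    (hγ : ∀ n : ℕ, PowerSeries.coeff n γ = Sinv 1 (PowerSeries.coeff (n + 1) g))
    (hD : ∀ m : ℕ, PowerSeries.coeff m D =
      ∑ n ∈ Finset.Icc 1 m,
        PowerSeries.coeff m (S n * (∑ j ∈ Finset.range n, g ^ j))) :
    γ * (1 - D) = 1 ∧ (1 - D) * γ = 1 := by
  have hg0 : PowerSeries.coeff 0 g = 1 := by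
    simpa [S] using hg 0
  have hgm : ∀ m, 1 ≤ m → PowerSeries.coeff m g =
      ∑ n ∈ Finset.Icc 1 m, FreeAlgebra.ι ℚ n * PowerSeries.coeff (m - n) (g ^ n) := by
    intro m hm
    rw [hg m]
    have hset : Finset.range (m+1) = insert 0 (Finset.Icc 1 m) := by
      ext x; simp [Nat.lt_succ_iff]; omega
    rw [hset, Finset.sum_insert (by simp)]
    rw [show PowerSeries.coeff m (S 0 * g ^ 0) = 0 by
      simp [S, PowerSeries.coeff_one]
      omega]
    rw [zero_add]
    refine Finset.sum_congr rfl fun n hn => ?_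
    rw [Finset.mem_Icc] at hn
    rw [coeff_S_mul hn.1, if_pos hn.2]
  have hE : ∀ j, Elin (PowerSeries.coeff j g) = if j = 0 then 1 else 0 := by
    intro j
    rcases Nat.eq_zero_or_pos j with h | h
    · subst h; rw [hg0, if_pos rfl, Elin_apply, E_one]
    · rw [if_neg (by omega), hgm j h, map_sum]
      apply Finset.sum_eq_zero
      intro n _
      rw [Elin_apply, E_mul, E_iota, zero_mul]
  have hEpow : ∀ n j, Elin (PowerSeries.coeff j (g ^ n)) = if j = 0 then 1 else 0 := by
    intro n
    induction n with
    | zero =>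
        intro j
        rw [pow_zero, PowerSeries.coeff_one]
        split
        · rw [Elin_apply, E_one]
        · exact map_zero Elin
    | succ n ih =>
        intro j
        rw [pow_succ, PowerSeries.coeff_mul, map_sum]
        have hterm : ∀ p : ℕ × ℕ,
            Elin (PowerSeries.coeff p.1 (g^n) * PowerSeries.coeff p.2 g)
            = (if p.1 = 0 then (1:ℚ) else 0) * (if p.2 = 0 then 1 else 0) := by
          intro p
          rw [Elin_apply, E_mul, ← Elin_apply, ← Elin_apply, ih, hE]
        rw [Finset.sum_congr rfl fun p _ => hterm p]
        rcases Nat.eq_zero_or_pos j with h | h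
        · subst h; simp
        · rw [if_neg (by omega)]
          apply Finset.sum_eq_zero
          intro p hp
          rw [Finset.HasAntidiagonal.mem_antidiagonal] at hp
          rcases Nat.eq_zero_or_pos p.1 with h1 | h1
          · rw [if_neg (by omega : ¬ p.2 = 0), mul_zero]
          · rw [if_neg (by omega : ¬ p.1 = 0), zero_mul]
  have hmain : ∀ m, PowerSeries.coeff m γ =
      PowerSeries.coeff m (1 + D * γ) := by
    intro m
    rw [hγ m, hgm (m+1) (by omega)]
    rw [show Sinv 1 (∑ n ∈ Finset.Icc 1 (m+1),
        FreeAlgebra.ι ℚ n * PowerSeries.coeff (m+1-n) (g^n))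
      = Llin (∑ n ∈ Finset.Icc 1 (m+1),
        FreeAlgebra.ι ℚ n * PowerSeries.coeff (m+1-n) (g^n)) from rfl]
    rw [map_sum]
    simp only [Llin_apply, Sinv_mul, Sinv_iota]
    rw [Finset.sum_add_distrib]
    have hLag : La g = γ * PowerSeries.X := by
      ext k
      cases k with
      | zero => rw [coeff_La, PowerSeries.coeff_zero_mul_X, hg0, Sinv_one]
      | succ k => rw [coeff_La, PowerSeries.coeff_succ_mul_X, hγ k]
    have hpart1 : (∑ n ∈ Finset.Icc 1 (m+1),
        FreeAlgebra.ι ℚ n * Sinv 1 (PowerSeries.coeff (m+1-n) (g^n)))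
        = PowerSeries.coeff m (D * γ) := by
      have step1 : ∀ n ∈ Finset.Icc 1 (m+1),
          FreeAlgebra.ι ℚ n * Sinv 1 (PowerSeries.coeff (m+1-n) (g^n))
          = PowerSeries.coeff m (S n * ((∑ j ∈ Finset.range n, g^j) * γ)) := by
        intro n hn
        rw [Finset.mem_Icc] at hn
        rw [← coeff_La, La_pow g hE, hLag]
        rw [show (∑ j ∈ Finset.range n, g^j) * (γ * PowerSeries.X)
            = ((∑ j ∈ Finset.range n, g^j) * γ) * PowerSeries.X from (mul_assoc _ _ _).symm]
        rcases Nat.lt_or_ge m n with h | h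
        · rw [show m+1-n = 0 by omega, PowerSeries.coeff_zero_mul_X, mul_zero]
          rw [coeff_S_mul hn.1, if_neg (by omega)]
        · rw [show m+1-n = (m-n)+1 by omega, PowerSeries.coeff_succ_mul_X]
          rw [coeff_S_mul hn.1, if_pos h]
      rw [Finset.sum_congr rfl step1]
      rw [← map_sum]
      rw [show (∑ n ∈ Finset.Icc 1 (m+1), S n * ((∑ j ∈ Finset.range n, g^j) * γ))
          = (∑ n ∈ Finset.Icc 1 (m+1), S n * (∑ j ∈ Finset.range n, g^j)) * γ by
        rw [Finset.sum_mul]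
        exact Finset.sum_congr rfl fun n _ => (mul_assoc _ _ _).symm]
      rw [PowerSeries.coeff_mul, PowerSeries.coeff_mul]
      refine Finset.sum_congr rfl fun p hp => ?_
      rw [Finset.HasAntidiagonal.mem_antidiagonal] at hp
      congr 1
      rw [map_sum, hD p.1]
      symm
      apply Finset.sum_subset
      · exact Finset.Icc_subset_Icc_right (by omega)
      · intro n hn hnot
        rw [Finset.mem_Icc] at hn hnot
        rw [coeff_S_mul (by omega), if_neg (by omega)]
    have hpart2 : (∑ n ∈ Finset.Icc 1 (m+1),
        E (PowerSeries.coeff (m+1-n) (g^n)) • (if n = 1 then (1:NSym) else 0))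
        = PowerSeries.coeff m 1 := by
      rw [PowerSeries.coeff_one]
      rcases Nat.eq_zero_or_pos m with h | h
      · subst h
        rw [if_pos rfl, Finset.Icc_self, Finset.sum_singleton, if_pos rfl]
        rw [show (0+1-1 : ℕ) = 0 from rfl, pow_one, hg0, E_one, one_smul]
      · rw [if_neg (by omega)]
        apply Finset.sum_eq_zero
        intro n hn
        rw [Finset.mem_Icc] at hn
        rcases eq_or_ne n 1 with h1 | h1
        · subst h1
          rw [show m+1-1 = m from rfl, ← Elin_apply, hEpow, if_neg (by omega), zero_smul]
        · rw [if_neg h1, smul_zero]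
    rw [hpart1, hpart2, map_add]
    rw [add_comm]
  have hmain' : γ = 1 + D * γ := PowerSeries.ext hmain
  have hright : (1 - D) * γ = 1 := by
    rw [sub_mul, one_mul]
    nth_rewrite 1 [hmain']
    rw [add_sub_cancel_right]
  have hD0 : PowerSeries.coeff 0 D = 0 := by simpa using hD 0
  have hDpow : ∀ k i, i < k → PowerSeries.coeff i (D ^ k) = 0 := by
    intro k
    induction k with
    | zero => intro i h; exact absurd h (Nat.not_lt_zero i)
    | succ k ih =>
        intro i hi
        rw [pow_succ, PowerSeries.coeff_mul]
        apply Finset.sum_eq_zero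
        intro p hp
        rw [Finset.HasAntidiagonal.mem_antidiagonal] at hp
        rcases Nat.lt_or_ge p.1 k with h | h
        · rw [ih p.1 h, zero_mul]
        · rw [show p.2 = 0 by omega, hD0, mul_zero]
  set v : PowerSeries NSym :=
    PowerSeries.mk fun n => PowerSeries.coeff n (∑ k ∈ Finset.range (n+1), D^k) with hv_def
  have hvT : ∀ i m : ℕ, i ≤ m → PowerSeries.coeff i v
      = PowerSeries.coeff i (∑ k ∈ Finset.range (m+1), D^k) := by
    intro i m him
    rw [show PowerSeries.coeff i v
      = PowerSeries.coeff i (∑ k ∈ Finset.range (i+1), D^k) from PowerSeries.coeff_mk _ _]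
    rw [map_sum, map_sum]
    apply Finset.sum_subset
    · exact Finset.range_subset_range.2 (by omega)
    · intro k hk hnk
      rw [Finset.mem_range] at hk hnk
      exact hDpow k i (by omega)
  have hv : v * (1 - D) = 1 := by
    ext m
    have h3 : (∑ k ∈ Finset.range (m+1), D^k) * (D - 1) = D^(m+1) - 1 := geom_sum_mul D (m+1)
    rw [mul_sub, mul_one] at h3
    have h4 : (∑ k ∈ Finset.range (m+1), D^k) - (∑ k ∈ Finset.range (m+1), D^k) * D
        = 1 - D^(m+1) := by
      rw [← neg_sub ((∑ k ∈ Finset.range (m+1), D^k) * D) (∑ k ∈ Finset.range (m+1), D^k),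
        h3, neg_sub]
    have e1 : PowerSeries.coeff m (v * D)
        = PowerSeries.coeff m ((∑ k ∈ Finset.range (m+1), D^k) * D) := by
      rw [PowerSeries.coeff_mul, PowerSeries.coeff_mul]
      refine Finset.sum_congr rfl fun p hp => ?_
      rw [Finset.HasAntidiagonal.mem_antidiagonal] at hp
      rw [hvT p.1 m (by omega)]
    rw [mul_sub, mul_one, map_sub, e1, hvT m m le_rfl, ← map_sub, h4, map_sub,
      hDpow (m+1) m (by omega), sub_zero]
  have hγv : γ = v := by
    calc γ = 1 * γ := (one_mul γ).symm
    _ = (v * (1 - D)) * γ := by rw [hv]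
    _ = v * ((1 - D) * γ) := mul_assoc _ _ _
    _ = v := by rw [hright, mul_one]
  exact ⟨hγv ▸ hv, hright⟩

end
end

section
/- For each integer k ≥ 1, let g^{(k)} be the unique series solving g^{(k)} = ∑_{n≥0} S_n (g^{(k)})^{kn} in the completed free algebra on S_1, S_2, .... Then g^{(k)} = φ_k(g), where g is the Lagrange series g = ∑ S_n g^n and φ_k is the algebra morphism sending S_n to S_{n/k} if k divides n and to 0 otherwise. -/
noncomputable section

/-- The algebra morphism `φ_k` sending `S_n` to `S_{n/k}` if `k ∣ n` and to `0` otherwise. -/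
def phi (k : ℕ) : NSym →ₐ[ℚ] NSym :=
  FreeAlgebra.lift ℚ fun n => if k ∣ n then FreeAlgebra.ι ℚ (n / k) else 0

namespace KLagrangeAux

open PowerSeries Finset

lemma phi_iota (k n : ℕ) :
    phi k (FreeAlgebra.ι ℚ n) = if k ∣ n then FreeAlgebra.ι ℚ (n / k) else 0 := by
  simp [phi]

lemma coeff_S_mul (n m : ℕ) (hn : n ≠ 0) (hnm : n ≤ m) (f : PowerSeries NSym) :
    PowerSeries.coeff m (S n * f) =
      FreeAlgebra.ι ℚ n * PowerSeries.coeff (m - n) f := by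
  rw [S, if_neg hn, PowerSeries.coeff_mul]
  rw [Finset.sum_eq_single (n, m - n)]
  · simp
  · rintro ⟨a, b⟩ hab hne
    simp only [Finset.HasAntidiagonal.mem_antidiagonal] at hab
    rw [PowerSeries.coeff_monomial]
    by_cases h : a = n
    · subst h
      have hb : b = m - a := by omega
      exact absurd (by rw [hb]) hne
    · simp [h]
  · intro h
    simp only [Finset.HasAntidiagonal.mem_antidiagonal] at h
    omega

lemma img_filter (k M : ℕ) (hk : 1 ≤ k) :
    (Finset.range (M+1)).image (fun a => k * a)
      = (Finset.range (k*M+1)).filter (fun a => k ∣ a) := by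
  ext x
  simp only [Finset.mem_image, Finset.mem_filter, Finset.mem_range, Nat.lt_succ_iff]
  constructor
  · rintro ⟨a, ha, rfl⟩
    exact ⟨Nat.mul_le_mul_left k ha, Dvd.intro a rfl⟩
  · rintro ⟨hx, c, rfl⟩
    exact ⟨c, Nat.le_of_mul_le_mul_left hx hk, rfl⟩

lemma powA (k : ℕ) (g : PowerSeries NSym) (N₀ : ℕ)
    (hQ : ∀ d ≤ N₀, ¬ k ∣ d → phi k (PowerSeries.coeff d g) = 0) :
    ∀ n N, N ≤ N₀ → ¬ k ∣ N → phi k (PowerSeries.coeff N (g ^ n)) = 0 := by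
  intro n
  induction n with
  | zero =>
    intro N hN hdvd
    have hN0 : N ≠ 0 := fun h => hdvd (h ▸ dvd_zero k)
    simp [PowerSeries.coeff_one, hN0]
  | succ n ih =>
    intro N hN hdvd
    rw [pow_succ', PowerSeries.coeff_mul, map_sum]
    apply Finset.sum_eq_zero
    rintro ⟨a, b⟩ hab
    simp only [Finset.HasAntidiagonal.mem_antidiagonal] at hab
    rw [map_mul]
    by_cases hka : k ∣ a
    · have hkb : ¬ k ∣ b := fun hb => hdvd (hab ▸ dvd_add hka hb)
      rw [ih b (by omega) hkb, mul_zero]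
    · rw [hQ a (by omega) hka, zero_mul]

lemma powB (k : ℕ) (hk : 1 ≤ k) (g gk : PowerSeries NSym) (M₀ : ℕ)
    (hQ : ∀ d ≤ k * M₀, ¬ k ∣ d → phi k (PowerSeries.coeff d g) = 0)
    (hP : ∀ i ≤ M₀, PowerSeries.coeff i gk = phi k (PowerSeries.coeff (k*i) g)) :
    ∀ n M, M ≤ M₀ →
      phi k (PowerSeries.coeff (k*M) (g ^ n)) = PowerSeries.coeff M (gk ^ n) := by
  intro n
  induction n with
  | zero =>
    intro M hM
    simp only [pow_zero, PowerSeries.coeff_one]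
    by_cases hM0 : M = 0
    · simp [hM0]
    · have hkM : k * M ≠ 0 := Nat.mul_ne_zero (by omega) hM0
      simp [hkM, hM0]
  | succ n ih =>
    intro M hM
    rw [pow_succ', pow_succ', PowerSeries.coeff_mul, PowerSeries.coeff_mul, map_sum,
      Finset.Nat.sum_antidiagonal_eq_sum_range_succ_mk,
      Finset.Nat.sum_antidiagonal_eq_sum_range_succ_mk]
    have hcond : ∀ a ∈ Finset.range (k*M+1),
        phi k (PowerSeries.coeff a g * PowerSeries.coeff (k*M - a) (g ^ n)) ≠ 0 →
        k ∣ a := by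
      intro a ha hne
      by_contra hka
      apply hne
      rw [map_mul, hQ a (le_trans (by simpa [Nat.lt_succ_iff] using ha)
        (Nat.mul_le_mul_left k hM)) hka, zero_mul]
    have hinj : ∀ x ∈ Finset.range (M+1), ∀ y ∈ Finset.range (M+1),
        k * x = k * y → x = y := fun x _ y _ h =>
      Nat.eq_of_mul_eq_mul_left (by omega) h
    rw [← Finset.sum_filter_of_ne hcond, ← img_filter k M hk, Finset.sum_image hinj]
    apply Finset.sum_congr rfl
    intro a ha
    simp only [Finset.mem_range, Nat.lt_succ_iff] at ha
    have hsub : k * M - k * a = k * (M - a) := by rw [Nat.mul_sub]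
    rw [map_mul, hsub, ih (M - a) (by omega), ← hP a (le_trans ha hM)]

end KLagrangeAux

/-- For `k ≥ 1`, the `k`-Lagrange series, the unique solution of
`g⁽ᵏ⁾ = ∑_{n≥0} S_n (g⁽ᵏ⁾)^{kn}`, equals `φ_k(g)` where `g` is the Lagrange series
`g = ∑ S_n g^n`: in each degree `m`, the degree-`m` component of `g⁽ᵏ⁾` is the image under
`φ_k` of the degree-`km` component of `g`. -/
theorem kLagrange_eq_phi
    (k : ℕ) (hk : 1 ≤ k) (g gk : PowerSeries NSym)
    (hg : ∀ m : ℕ, PowerSeries.coeff m g =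
      ∑ n ∈ Finset.range (m + 1), PowerSeries.coeff m (S n * g ^ n))
    (hgk : ∀ m : ℕ, PowerSeries.coeff m gk =
      ∑ n ∈ Finset.range (m + 1), PowerSeries.coeff m (S n * gk ^ (k * n))) :
    ∀ m : ℕ, PowerSeries.coeff m gk = phi k (PowerSeries.coeff (k * m) g) := by
  classical
  open KLagrangeAux in
  have H : ∀ D : ℕ, (¬ k ∣ D → phi k (PowerSeries.coeff D g) = 0) ∧
      (∀ m, k * m = D →
        PowerSeries.coeff m gk = phi k (PowerSeries.coeff (k*m) g)) := by
    intro D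
    induction D using Nat.strong_induction_on with
    | _ D ih =>
      constructor
      · intro hdvd
        rw [hg D, map_sum]
        apply Finset.sum_eq_zero
        intro n hn
        simp only [Finset.mem_range, Nat.lt_succ_iff] at hn
        rcases Nat.eq_zero_or_pos n with rfl | hpos
        · have hD : D ≠ 0 := fun h => hdvd (h ▸ dvd_zero k)
          simp [S, PowerSeries.coeff_one, hD]
        · rw [coeff_S_mul n D (by omega) hn, map_mul]
          by_cases hkn : k ∣ n
          · have hknD : ¬ k ∣ (D - n) := by
              intro h
              exact hdvd (by simpa [Nat.sub_add_cancel hn] using dvd_add h hkn)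
            rw [powA k g (D - n)
              (fun d hd => (ih d (lt_of_le_of_lt hd (by omega))).1) n (D - n)
              le_rfl hknD, mul_zero]
          · rw [phi_iota, if_neg hkn, zero_mul]
      · intro m hm
        subst hm
        rw [hgk m, hg (k*m), map_sum]
        have hcond : ∀ n ∈ Finset.range (k*m+1),
            phi k (PowerSeries.coeff (k*m) (S n * g ^ n)) ≠ 0 → k ∣ n := by
          intro n hn hne
          by_contra hkn
          apply hne
          have hn0 : n ≠ 0 := fun h => hkn (h ▸ dvd_zero k)
          rw [coeff_S_mul n (k*m) hn0 (by simpa [Nat.lt_succ_iff] using hn),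
            map_mul, phi_iota, if_neg hkn, zero_mul]
        have hinj : ∀ x ∈ Finset.range (m+1), ∀ y ∈ Finset.range (m+1),
            k * x = k * y → x = y := fun x _ y _ h =>
          Nat.eq_of_mul_eq_mul_left (by omega) h
        rw [← Finset.sum_filter_of_ne hcond, ← img_filter k m hk,
          Finset.sum_image hinj]
        apply Finset.sum_congr rfl
        intro j hj
        simp only [Finset.mem_range, Nat.lt_succ_iff] at hj
        rcases Nat.eq_zero_or_pos j with rfl | hjpos
        · simp only [Nat.mul_zero, pow_zero, mul_one, S, if_pos rfl, one_mul]
          by_cases hm0 : m = 0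
          · simp [hm0]
          · have : k * m ≠ 0 := Nat.mul_ne_zero (by omega) hm0
            simp [PowerSeries.coeff_one, hm0, this]
        · have hj0 : j ≠ 0 := by omega
          have hkj0 : k * j ≠ 0 := Nat.mul_ne_zero (by omega) hj0
          have hkjm : k * j ≤ k * m := Nat.mul_le_mul_left k hj
          rw [coeff_S_mul j m hj0 hj, coeff_S_mul (k*j) (k*m) hkj0 hkjm,
            map_mul, phi_iota, if_pos ⟨j, rfl⟩, Nat.mul_div_cancel_left j (by omega)]
          congr 1
          have hsub : k * m - k * j = k * (m - j) := by rw [Nat.mul_sub]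
          have hm1 : 1 ≤ m := le_trans hjpos hj
          have hlt : k * (m-1) < k * m := by
            have h1 : k * (m-1) + k = k * m := by
              rw [← Nat.mul_succ]; congr 1; omega
            omega
          rw [hsub, powB k hk g gk (m-1)
            (fun d hd hkd => (ih d (lt_of_le_of_lt hd hlt)).1 hkd)
            (fun i hi => (ih (k*i)
              (lt_of_le_of_lt (Nat.mul_le_mul_left k hi) hlt)).2 i rfl)
            (k*j) (m-j) (by omega)]
  exact fun m => (H (k*m)).2 m rfl


end
end
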